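/- In OF_n, two elements are J-equivalent if and only if they have the same rank (image cardinality); equivalently f_{X,Y} J f_{Z,W} iff |X| = |Z|. -/

import Mathlib

/-- The order-preserving map `f_{X,Y} : [n+1] → [n+1]` (with top element
`Fin.last n` playing the role of `n+1`, and `X, Y ⊆ [n]` via `Fin.castSucc`)
determined by equal-size subsets `X, Y`: it sends the interval
`(x_{i-1}, x_i]` to `y_i` and everything above `x_l` to the top. -/
def fXY (n : ℕ) (X Y : Finset (Fin n)) (_h : X.card = Y.card) :
    Fin (n + 1) → Fin (n + 1) := fun x =>
  if hk : (X.filter fun t => t.castSucc < x).card < Y.card then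
    (Y.orderEmbOfFin rfl ⟨_, hk⟩).castSucc
  else Fin.last n

theorem fXY_monotone (n : ℕ) (X Y : Finset (Fin n)) (h : X.card = Y.card) :
    Monotone (fXY n X Y h) := by
  intro a b hab
  unfold fXY
  have hle : (X.filter fun t => t.castSucc < a).card ≤
      (X.filter fun t => t.castSucc < b).card :=
    Finset.card_le_card (Finset.monotone_filter_right X
      (fun t _ ht => lt_of_lt_of_le ht hab))
  by_cases ha : (X.filter fun t => t.castSucc < a).card < Y.card
  · by_cases hb : (X.filter fun t => t.castSucc < b).card < Y.card
    · rw [dif_pos ha, dif_pos hb]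
      exact Fin.castSucc_le_castSucc_iff.mpr
        ((Y.orderEmbOfFin rfl).monotone (by exact hle))
    · rw [dif_pos ha, dif_neg hb]; exact Fin.le_last _
  · have hb : ¬(X.filter fun t => t.castSucc < b).card < Y.card := by omega
    rw [dif_neg ha, dif_neg hb]

theorem fXY_last (n : ℕ) (X Y : Finset (Fin n)) (h : X.card = Y.card) :
    fXY n X Y h (Fin.last n) = Fin.last n := by
  unfold fXY
  rw [Finset.filter_true_of_mem (fun t _ => Fin.castSucc_lt_last t), h,
    dif_neg (lt_irrefl _)]

/-- The monoid `OF_{n+1}` of order-preserving self-maps of `[n+1]` fixing the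
top element, as a submonoid of `Function.End (Fin (n+1))`. -/
def OFmon (n : ℕ) : Submonoid (Function.End (Fin (n + 1))) where
  carrier := {f | Monotone f ∧ f (Fin.last n) = Fin.last n}
  mul_mem' := by
    rintro f g ⟨hf1, hf2⟩ ⟨hg1, hg2⟩
    refine ⟨hf1.comp hg1, ?_⟩
    show f (g (Fin.last n)) = Fin.last n
    rw [hg2, hf2]
  one_mem' := ⟨monotone_id, rfl⟩

/-- `f_{X,Y}` as an element of the monoid `OF_{n+1}`. -/
def FXY (n : ℕ) (X Y : Finset (Fin n)) (h : X.card = Y.card) : OFmon n :=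
  ⟨fXY n X Y h, fXY_monotone n X Y h, fXY_last n X Y h⟩

/-- Green's `R`-equivalence on a monoid. -/
def RRel {M : Type*} [Monoid M] (a b : M) : Prop :=
  (∃ u, a * u = b) ∧ ∃ u, b * u = a

/-- Green's `L`-equivalence on a monoid. -/
def LRel {M : Type*} [Monoid M] (a b : M) : Prop :=
  (∃ u, u * a = b) ∧ ∃ u, u * b = a

/-- Green's `J`-equivalence on a monoid. -/
def JRel {M : Type*} [Monoid M] (a b : M) : Prop :=
  (∃ u v, u * a * v = b) ∧ ∃ u v, u * b * v = a

/-!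
Composing on either side cannot increase the rank, so `J`-equivalent elements have equal rank.
Conversely, let `f, g` be order-preserving, fix the top and have images `A`, `B` of equal size,
and let `e : B ≃o A` be the increasing bijection. Then `g = u ∘ f ∘ v`, where `v x` is the
largest `f`-preimage of `e (g x)` and `u` rounds a point up to the nearest element of `A` and
applies `e⁻¹`; both maps are order-preserving and fix the top, since `⊤ ∈ A ∩ B`.
Finally, `f_{X,Y}` sends the `i`-th element of `X` to the `i`-th element of `Y`, so its image
is `Y ∪ {top}` and its rank is `|X| + 1`.
-/

open Finset

section LinearOrder

variable {α β : Type*} [LinearOrder α]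

namespace Finset

def roundUp [OrderTop α] (A : Finset α) (hA : ⊤ ∈ A) (y : α) : A :=
  have hne : (A.filter (y ≤ ·)).Nonempty := ⟨⊤, mem_filter.2 ⟨hA, le_top⟩⟩
  ⟨(A.filter (y ≤ ·)).min' hne, (mem_filter.1 (min'_mem _ hne)).1⟩

variable [OrderTop α] {A : Finset α} {hA : ⊤ ∈ A}

lemma le_roundUp (y : α) : y ≤ A.roundUp hA y :=
  (mem_filter.1 (min'_mem (A.filter (y ≤ ·)) ⟨⊤, mem_filter.2 ⟨hA, le_top⟩⟩)).2

lemma roundUp_monotone : Monotone (A.roundUp hA) := fun _ _ hy =>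
  min'_le _ _ (mem_filter.2 ⟨(A.roundUp hA _).2, hy.trans (le_roundUp _)⟩)

lemma roundUp_of_mem {a : α} (ha : a ∈ A) : A.roundUp hA a = ⟨a, ha⟩ :=
  Subtype.ext <| le_antisymm (min'_le _ _ (mem_filter.2 ⟨ha, le_rfl⟩)) (le_roundUp a)

end Finset

def Finset.orderIsoOfCardEq (A B : Finset α) (h : #A = #B) : A ≃o B :=
  (A.orderIsoOfFin h).symm.trans (B.orderIsoOfFin rfl)

lemma OrderIso.apply_mk_top [OrderTop α] {A B : Finset α} (e : A ≃o B) (hA : ⊤ ∈ A)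
    (hB : ⊤ ∈ B) : e ⟨⊤, hA⟩ = ⟨⊤, hB⟩ :=
  (e.isMax_apply.2 fun b _ => Subtype.coe_le_coe.1 (le_top (a := (b : α)))).eq_of_le
    (Subtype.coe_le_coe.1 le_top)

variable [Fintype α] [LinearOrder β]

def lastPreimage (f : α → β) (b : univ.image f) : α :=
  (univ.filter (f · = b)).max' <| by
    obtain ⟨x, -, hx⟩ := mem_image.1 b.2
    exact ⟨x, mem_filter.2 ⟨mem_univ x, hx⟩⟩

lemma apply_lastPreimage (f : α → β) (b : univ.image f) : f (lastPreimage f b) = b := by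
  unfold lastPreimage; exact (mem_filter.1 (max'_mem (univ.filter (f · = b)) _)).2

variable {f : α → β}

lemma lastPreimage_eq_top [OrderTop α] {b : univ.image f} (h : f ⊤ = b) :
    lastPreimage f b = ⊤ :=
  top_le_iff.1 (le_max' _ ⊤ (mem_filter.2 ⟨mem_univ _, h⟩))

lemma Monotone.monotone_lastPreimage (hf : Monotone f) : Monotone (lastPreimage f) := by
  intro b b' hbb'
  rcases hbb'.lt_or_eq with hlt | rfl
  · refine (hf.reflect_lt ?_).le
    rwa [apply_lastPreimage f, apply_lastPreimage f]
  · rfl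

end LinearOrder

lemma card_image_univ_comp_comp_le {α β γ δ : Type*} [Fintype α] [Fintype β] [DecidableEq γ]
    [DecidableEq δ] (u : γ → δ) (f : β → γ) (v : α → β) :
    #(univ.image (u ∘ f ∘ v)) ≤ #(univ.image f) :=
  calc #(univ.image (u ∘ f ∘ v)) = #((univ.image (f ∘ v)).image u) := by rw [image_image]
    _ ≤ #(univ.image (f ∘ v)) := card_image_le
    _ ≤ #(univ.image f) :=
      card_le_card <| image_subset_iff.2 fun x _ => mem_image_of_mem f (mem_univ (v x))

theorem exists_monotone_comp_comp_eq {α : Type*} [LinearOrder α] [Fintype α] [OrderTop α]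
    {f g : α → α} (hf : Monotone f) (hg : Monotone g) (hf_top : f ⊤ = ⊤) (hg_top : g ⊤ = ⊤)
    (h : #(univ.image f) = #(univ.image g)) :
    ∃ u v : α → α, Monotone u ∧ u ⊤ = ⊤ ∧ Monotone v ∧ v ⊤ = ⊤ ∧ u ∘ f ∘ v = g := by
  have hA : ⊤ ∈ univ.image f := hf_top ▸ mem_image_of_mem f (mem_univ ⊤)
  have hB : ⊤ ∈ univ.image g := hg_top ▸ mem_image_of_mem g (mem_univ ⊤)
  let e := orderIsoOfCardEq _ _ h.symm
  let g' : α → univ.image g := fun x => ⟨g x, mem_image_of_mem g (mem_univ x)⟩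
  refine ⟨fun y => e.symm ((univ.image f).roundUp hA y), fun x => lastPreimage f (e (g' x)),
    ?_, ?_, ?_, ?_, ?_⟩
  · exact Subtype.mono_coe _ |>.comp <| e.symm.monotone.comp roundUp_monotone
  · simp only [roundUp_of_mem hA, ← OrderIso.apply_mk_top e hB hA, OrderIso.symm_apply_apply]
  · exact hf.monotone_lastPreimage.comp <| e.monotone.comp fun _ _ hxy => hg hxy
  · refine lastPreimage_eq_top ?_
    have hg' : g' ⊤ = ⟨⊤, hB⟩ := Subtype.ext hg_top
    rw [hg', OrderIso.apply_mk_top e hB hA, hf_top]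
  · funext x
    simp [apply_lastPreimage, roundUp_of_mem, g']

namespace OFmon

variable {n : ℕ}

lemma card_image_le_of_mul_mul_eq {f g : OFmon n} {u v : OFmon n} (h : u * f * v = g) :
    #(univ.image g.1) ≤ #(univ.image f.1) :=
  h ▸ card_image_univ_comp_comp_le u.1 f.1 v.1

lemma exists_mul_mul_eq_of_card_image_eq {f g : OFmon n}
    (h : #(univ.image f.1) = #(univ.image g.1)) : ∃ u v : OFmon n, u * f * v = g := by
  obtain ⟨u, v, hu, hu_top, hv, hv_top, huv⟩ :=
    exists_monotone_comp_comp_eq f.2.1 g.2.1 f.2.2 g.2.2 h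
  exact ⟨⟨u, hu, hu_top⟩, ⟨v, hv, hv_top⟩, Subtype.ext huv⟩

theorem jRel_iff_card_image_eq (f g : OFmon n) :
    JRel f g ↔ #(univ.image f.1) = #(univ.image g.1) :=
  ⟨fun ⟨⟨_, _, hg⟩, ⟨_, _, hf⟩⟩ =>
    (card_image_le_of_mul_mul_eq hf).antisymm (card_image_le_of_mul_mul_eq hg),
   fun h => ⟨exists_mul_mul_eq_of_card_image_eq h, exists_mul_mul_eq_of_card_image_eq h.symm⟩⟩

end OFmon

lemma Finset.card_filter_lt_orderEmbOfFin {α : Type*} [LinearOrder α] (s : Finset α) {k : ℕ}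
    (h : #s = k) (i : Fin k) : #(s.filter (· < s.orderEmbOfFin h i)) = i := by
  have : s.filter (· < s.orderEmbOfFin h i) = (Iio i).map (s.orderEmbOfFin h).toEmbedding := by
    ext y
    simp only [mem_filter, mem_map, mem_Iio, RelEmbedding.coe_toEmbedding]
    constructor
    · rintro ⟨hy, hlt⟩
      obtain ⟨j, rfl⟩ : y ∈ Set.range (s.orderEmbOfFin h) := by simpa using hy
      exact ⟨j, (s.orderEmbOfFin h).lt_iff_lt.1 hlt, rfl⟩
    · rintro ⟨j, hj, rfl⟩
      exact ⟨orderEmbOfFin_mem s h j, (s.orderEmbOfFin h).lt_iff_lt.2 hj⟩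
  rw [this, card_map, Fin.card_Iio]

lemma fXY_castSucc_orderEmbOfFin (n : ℕ) (X Y : Finset (Fin n)) (h : #X = #Y) (i : Fin #Y) :
    fXY n X Y h (X.orderEmbOfFin h i).castSucc = (Y.orderEmbOfFin rfl i).castSucc := by
  simp [fXY, X.card_filter_lt_orderEmbOfFin h i]

lemma image_fXY (n : ℕ) (X Y : Finset (Fin n)) (h : #X = #Y) :
    univ.image (fXY n X Y h) = insert (Fin.last n) (Y.map Fin.castSuccEmb) := by
  ext y
  simp only [mem_image, mem_univ, true_and, mem_insert, mem_map, Fin.coe_castSuccEmb]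
  constructor
  · rintro ⟨x, rfl⟩
    unfold fXY
    split_ifs
    · exact Or.inr ⟨_, orderEmbOfFin_mem Y rfl _, rfl⟩
    · exact Or.inl rfl
  · rintro (rfl | ⟨b, hb, rfl⟩)
    · exact ⟨_, fXY_last n X Y h⟩
    · obtain ⟨i, rfl⟩ : b ∈ Set.range (Y.orderEmbOfFin rfl) := by simpa using hb
      exact ⟨_, fXY_castSucc_orderEmbOfFin n X Y h i⟩

lemma card_image_fXY (n : ℕ) (X Y : Finset (Fin n)) (h : #X = #Y) :
    #(univ.image (fXY n X Y h)) = #X + 1 := by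
  rw [image_fXY, card_insert_of_notMem, card_map, h]
  simp [Fin.castSucc_ne_last]

/-- In `OF_{n+1}`, two elements are `J`-equivalent iff they have the same rank
(image cardinality); equivalently `f_{X,Y} J f_{Z,W}` iff `|X| = |Z|`. -/
theorem statement14 (n : ℕ) :
    (∀ f g : OFmon n, JRel f g ↔
      (Finset.image f.1 Finset.univ).card = (Finset.image g.1 Finset.univ).card) ∧
    (∀ (X Y Z W : Finset (Fin n)) (h1 : X.card = Y.card) (h2 : Z.card = W.card),
      JRel (FXY n X Y h1) (FXY n Z W h2) ↔ X.card = Z.card) := by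
  refine ⟨OFmon.jRel_iff_card_image_eq, fun X Y Z W h1 h2 => ?_⟩
  rw [OFmon.jRel_iff_card_image_eq]
  show #(univ.image (fXY n X Y h1)) = #(univ.image (fXY n Z W h2)) ↔ _
  rw [card_image_fXY, card_image_fXY, Nat.add_right_cancel_iff]
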